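/- arXiv:1408.4862 — 13 statements merged into one kernel-verified Lean document; each statement's English description precedes it below -/
import Mathlib

section
/- For every finite simple undirected graph G on the vertex set {1,…,n}, every integer q ≥ 2, every RDSS code C for G over an alphabet A with |A| = q, and every vertex cover W of G (a set W of vertices such that every edge of G has at least one endpoint in W), the size of C satisfies |C| ≤ q^{|W|}. -/
/-- A recoverable distributed storage system (RDSS) code for the graph with
adjacency relation `Adj` on `Fin n`, over alphabet `A`: for every vertex `i`,
any two codewords agreeing on all (out-)neighbors of `i` agree at `i`. -/
def IsRDSS {n : ℕ} {A : Type*} (Adj : Fin n → Fin n → Prop) (C : Set (Fin n → A)) : Prop :=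
  ∀ i : Fin n, ∀ x ∈ C, ∀ y ∈ C, (∀ j : Fin n, Adj i j → x j = y j) → x i = y i

/-- any RDSS code for an undirected graph has size at most
`q ^ |W|` for any vertex cover `W`. -/
theorem stmt0 {n q : ℕ} (hn : 1 ≤ n) (hq : 2 ≤ q) {A : Type} [Fintype A]
    (hA : Fintype.card A = q) (G : SimpleGraph (Fin n))
    (C : Set (Fin n → A)) (hC : IsRDSS G.Adj C)
    (W : Finset (Fin n)) (hW : ∀ u v : Fin n, G.Adj u v → u ∈ W ∨ v ∈ W) :
    C.ncard ≤ q ^ W.card := by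
  have hinj : Function.Injective (fun x : C => fun w : W => (x : Fin n → A) w) := by
    rintro ⟨x, hx⟩ ⟨y, hy⟩ h
    have hWagree : ∀ w : Fin n, w ∈ W → x w = y w := fun w hw =>
      congrFun h ⟨w, hw⟩
    have hall : ∀ i : Fin n, x i = y i := by
      intro i
      by_cases hi : i ∈ W
      · exact hWagree i hi
      · apply hC i x hx y hy
        intro j hj
        rcases hW i j hj with h' | h'
        · exact absurd h' hi
        · exact hWagree j h'
    exact Subtype.ext (funext hall)
  calc C.ncard = Nat.card C := (Nat.card_coe_set_eq C).symm
    _ ≤ Nat.card (W → A) := Nat.card_le_card_of_injective _ hinj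
    _ = q ^ W.card := by
        simp [Nat.card_eq_fintype_card, Fintype.card_fun, hA]
end

section
/- For every finite simple undirected graph G on the vertex set {1,…,n} and every integer q ≥ 2, there exists an RDSS code C for G over an alphabet A with |A| = q whose size satisfies |C| ≥ q^{ν(G)}, where ν(G) is the maximum size of a matching in G (a matching being a set of pairwise vertex-disjoint edges). -/
/-- for every matching `M` of an undirected graph `G` (in particular
a maximum matching, of size `ν(G)`), there is an RDSS code for `G` over an
alphabet of size `q` with at least `q ^ |M|` codewords. -/
theorem stmt1 {n q : ℕ} (hn : 1 ≤ n) (hq : 2 ≤ q) {A : Type} [Fintype A]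
    (hA : Fintype.card A = q) (G : SimpleGraph (Fin n))
    (M : Finset (Fin n × Fin n))
    (hM : ∀ e ∈ M, G.Adj e.1 e.2)
    (hdisj : ∀ e ∈ M, ∀ e' ∈ M, e ≠ e' →
      e.1 ≠ e'.1 ∧ e.1 ≠ e'.2 ∧ e.2 ≠ e'.1 ∧ e.2 ≠ e'.2) :
    ∃ C : Set (Fin n → A), IsRDSS G.Adj C ∧ q ^ M.card ≤ C.ncard := by
  classical
  obtain ⟨a0⟩ : Nonempty A := Fintype.card_pos_iff.mp (by omega)
  let φ : ({e // e ∈ M} → A) → (Fin n → A) := fun f i =>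
    if h : ∃ e : {e // e ∈ M}, i = e.1.1 ∨ i = e.1.2 then f h.choose else a0
  have key : ∀ (e : {e // e ∈ M}) (i : Fin n), (i = e.1.1 ∨ i = e.1.2) →
      ∀ f, φ f i = f e := by
    intro e i hi f
    have h : ∃ e' : {e // e ∈ M}, i = e'.1.1 ∨ i = e'.1.2 := ⟨e, hi⟩
    simp only [φ, dif_pos h]
    congr 1
    have hspec := h.choose_spec
    by_contra hne
    have hne' : h.choose.1 ≠ e.1 := fun hc => hne (Subtype.ext hc)
    obtain ⟨a, b, c, d⟩ := hdisj _ h.choose.2 _ e.2 hne'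
    rcases hspec with h1 | h1 <;> rcases hi with h2 | h2
    · exact a (h1.symm.trans h2)
    · exact b (h1.symm.trans h2)
    · exact c (h1.symm.trans h2)
    · exact d (h1.symm.trans h2)
  have hinj : Function.Injective φ := by
    intro f g hfg
    funext e
    have := congrFun hfg e.1.1
    rwa [key e e.1.1 (Or.inl rfl) f, key e e.1.1 (Or.inl rfl) g] at this
  refine ⟨Set.range φ, ?_, ?_⟩
  · rintro i x ⟨f, rfl⟩ y ⟨g, rfl⟩ hxy
    by_cases h : ∃ e : {e // e ∈ M}, i = e.1.1 ∨ i = e.1.2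
    · obtain ⟨e, he⟩ := h
      rcases he with he | he
      · have hadj : G.Adj i e.1.2 := he ▸ hM e.1 e.2
        have hj := hxy e.1.2 hadj
        rw [key e _ (Or.inr rfl) f, key e _ (Or.inr rfl) g] at hj
        rw [key e i (Or.inl he) f, key e i (Or.inl he) g, hj]
      · have hadj : G.Adj i e.1.1 := he ▸ (hM e.1 e.2).symm
        have hj := hxy e.1.1 hadj
        rw [key e _ (Or.inl rfl) f, key e _ (Or.inl rfl) g] at hj
        rw [key e i (Or.inr he) f, key e i (Or.inr he) g, hj]
    · show φ f i = φ g i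
      simp only [φ]
      rw [dif_neg h, dif_neg h]
  · rw [← Nat.card_coe_set_eq, Nat.card_range_of_injective hinj, Nat.card_eq_fintype_card,
      Fintype.card_fun, Fintype.card_coe, hA]
end

section
/- Let G be a finite directed graph (with no loops) on the vertex set {1,…,n} and let q ≥ 2 be an integer. Define Q_q(G) = { x ∈ (ZMod q)^n : there exists a vertex i with x_i ≠ 0 and x_j = 0 for all j ∈ N(i) }. Then there exists an RDSS code C ⊆ (ZMod q)^n for G with |C| ≥ q^n / (|Q_q(G)| + 1). -/
/-- Gilbert–Varshamov type bound: there is an RDSS code of size at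
least `q^n / (|Q_q(G)| + 1)`, where
`Q_q(G) = {x : ∃ i, x i ≠ 0 ∧ x j = 0 for all out-neighbors j of i}`. -/
theorem stmt2 {n q : ℕ} (hn : 1 ≤ n) (hq : 2 ≤ q)
    (Adj : Fin n → Fin n → Prop) (hirr : ∀ i, ¬ Adj i i) :
    ∃ C : Set (Fin n → ZMod q), IsRDSS Adj C ∧
      ((q : ℝ) ^ n) /
          ((({x : Fin n → ZMod q | ∃ i, x i ≠ 0 ∧ ∀ j, Adj i j → x j = 0}).ncard : ℝ) + 1)
        ≤ (C.ncard : ℝ) := by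
  classical
  haveI : NeZero q := ⟨by omega⟩
  set V := Fin n → ZMod q
  set Q : Set V := {x : V | ∃ i, x i ≠ 0 ∧ ∀ j, Adj i j → x j = 0} with hQ
  -- Q is closed under negation
  have hQneg : ∀ w ∈ Q, -w ∈ Q := by
    rintro w ⟨i, h1, h2⟩
    exact ⟨i, fun h => h1 (neg_eq_zero.mp h), fun j hj => neg_eq_zero.mpr (h2 j hj)⟩
  have hdiff : ∀ x y : V, (x - y ∈ Q) ↔ ∃ i, x i ≠ y i ∧ ∀ j, Adj i j → x j = y j := by
    intro x y
    constructor
    · rintro ⟨i, h1, h2⟩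
      exact ⟨i, sub_ne_zero.mp h1, fun j hj => sub_eq_zero.mp (h2 j hj)⟩
    · rintro ⟨i, h1, h2⟩
      exact ⟨i, sub_ne_zero.mpr h1, fun j hj => sub_eq_zero.mpr (h2 j hj)⟩
  -- good finsets
  let good : Finset V → Prop := fun C => ∀ x ∈ C, ∀ y ∈ C, x ≠ y → x - y ∉ Q
  have hgood_dec : DecidablePred good := fun _ => Classical.dec _
  let S : Finset (Finset V) := Finset.univ.filter good
  have hSne : S.Nonempty := ⟨∅, by simp [S, good]⟩
  obtain ⟨C, hCS, hCmax⟩ := S.exists_max_image Finset.card hSne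
  have hCgood : good C := (Finset.mem_filter.mp hCS).2
  -- RDSS
  have hRDSS : IsRDSS Adj (↑C : Set V) := by
    intro i x hx y hy hagree
    by_contra hne
    have hxy : x ≠ y := fun h => hne (by rw [h])
    exact hCgood x hx y hy hxy ((hdiff x y).mpr ⟨i, hne, hagree⟩)
  -- coverage
  have hcover : ∀ z : V, z ∈ C ∨ ∃ c ∈ C, z - c ∈ Q := by
    intro z
    by_cases hz : z ∈ C
    · exact Or.inl hz
    right
    by_contra hno
    push_neg at hno
    have hins : good (insert z C) := by
      intro x hx y hy hxy
      rcases Finset.mem_insert.mp hx with hxz | hx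
      · rcases Finset.mem_insert.mp hy with hyz | hy
        · exact absurd (hxz.trans hyz.symm) hxy
        · rw [hxz]; exact hno y hy
      · rcases Finset.mem_insert.mp hy with hyz | hy
        · intro h
          rw [hyz] at h
          exact hno x hx (by simpa using hQneg _ h)
        · exact hCgood x hx y hy hxy
    have : insert z C ∈ S := Finset.mem_filter.mpr ⟨Finset.mem_univ _, hins⟩
    have hle := hCmax _ this
    rw [Finset.card_insert_of_notMem hz] at hle
    omega
  -- counting
  let Qf : Finset V := Q.toFinset
  have hsub : (Finset.univ : Finset V) ⊆ C.biUnion (fun c => insert c (Qf.image (c + ·))) := by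
    intro z _
    rcases hcover z with hz | ⟨c, hc, hzc⟩
    · exact Finset.mem_biUnion.mpr ⟨z, hz, Finset.mem_insert_self _ _⟩
    · refine Finset.mem_biUnion.mpr ⟨c, hc, Finset.mem_insert_of_mem ?_⟩
      exact Finset.mem_image.mpr ⟨z - c, Set.mem_toFinset.mpr hzc, by ring⟩
  have hcount : (q : ℕ) ^ n ≤ C.card * (Qf.card + 1) := by
    calc (q : ℕ) ^ n = Fintype.card V := by
          simp [V, Fintype.card_fun, ZMod.card]
      _ ≤ (C.biUnion (fun c => insert c (Qf.image (c + ·)))).card :=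
          Finset.card_le_card (by simpa using hsub)
      _ ≤ ∑ c ∈ C, (insert c (Qf.image (c + ·))).card := Finset.card_biUnion_le
      _ ≤ ∑ c ∈ C, (Qf.card + 1) := by
          refine Finset.sum_le_sum fun c _ => ?_
          calc (insert c (Qf.image (c + ·))).card ≤ (Qf.image (c + ·)).card + 1 :=
                Finset.card_insert_le _ _
            _ ≤ Qf.card + 1 := by
                exact Nat.add_le_add_right (Finset.card_image_le) 1
      _ = C.card * (Qf.card + 1) := by rw [Finset.sum_const, smul_eq_mul]
  refine ⟨↑C, hRDSS, ?_⟩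
  have hQn : Q.ncard = Qf.card := by
    rw [Set.ncard_eq_toFinset_card']
  have hCn : (↑C : Set V).ncard = C.card := Set.ncard_coe_finset C
  rw [hCn, hQn]
  rw [div_le_iff₀ (by positivity)]
  have : ((q : ℝ) ^ n) = ((q ^ n : ℕ) : ℝ) := by push_cast; ring
  rw [this]
  calc ((q ^ n : ℕ) : ℝ) ≤ ((C.card * (Qf.card + 1) : ℕ) : ℝ) := by exact_mod_cast hcount
    _ = C.card * (Qf.card + 1) := by push_cast; ring
end

section
/- Let G be a finite directed graph (with no loops) on the vertex set {1,…,n}, let q ≥ 2 be an integer, and let C be an RDSS code for G over an alphabet A with |A| = q. Then for every feedback vertex set S of G (a set S of vertices such that the subgraph of G induced on V ∖ S contains no directed cycle), |C| ≤ q^{|S|}. -/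
/-- There is a directed cycle of `Adj` whose vertices all lie in `T`:
a cyclic sequence of distinct vertices each pointing to the next. -/
def HasDirCycleIn {V : Type*} (Adj : V → V → Prop) (T : Set V) : Prop :=
  ∃ (m : ℕ) (hm : 0 < m) (u : Fin m → V), Function.Injective u ∧ (∀ i, u i ∈ T) ∧
    ∀ i : Fin m, Adj (u i) (u ⟨(i.1 + 1) % m, Nat.mod_lt _ hm⟩)

/-- any RDSS code for a directed graph has size at most `q ^ |S|`
for any feedback vertex set `S`. -/
theorem stmt3 {n q : ℕ} (hn : 1 ≤ n) (hq : 2 ≤ q) {A : Type} [Fintype A]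
    (hA : Fintype.card A = q)
    (Adj : Fin n → Fin n → Prop) (hirr : ∀ i, ¬ Adj i i)
    (C : Set (Fin n → A)) (hC : IsRDSS Adj C)
    (S : Finset (Fin n)) (hS : ¬ HasDirCycleIn Adj {v : Fin n | v ∉ S}) :
    C.ncard ≤ q ^ S.card := by
  classical
  -- Key: two codewords agreeing on S are equal.
  have key : ∀ x ∈ C, ∀ y ∈ C, (∀ s ∈ S, x s = y s) → x = y := by
    intro x hx y hy hagree
    by_contra hxy
    set D : Set (Fin n) := {i | x i ≠ y i} with hDdef
    obtain ⟨i0, hi0⟩ : ∃ i, x i ≠ y i := Function.ne_iff.mp hxy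
    have hi0D : i0 ∈ D := hi0
    have hDS : ∀ i ∈ D, i ∉ S := fun i hi hiS => hi (hagree i hiS)
    have hsucc : ∀ i, ∃ j, i ∈ D → (Adj i j ∧ j ∈ D) := by
      intro i
      by_cases hi : i ∈ D
      · by_contra h
        push_neg at h
        apply hi
        refine hC i x hx y hy ?_
        intro j hj
        by_contra hne
        exact (h j).2 hj hne
      · exact ⟨i, fun h => absurd h hi⟩
    choose f hf using hsucc
    set g : ℕ → Fin n := fun t => f^[t] i0 with hgdef
    have hgD : ∀ t, g t ∈ D := by
      intro t
      induction t with
      | zero => exact hi0D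
      | succ t ih =>
        have : g (t+1) = f (g t) := Function.iterate_succ_apply' f t i0
        rw [this]
        exact (hf (g t) ih).2
    have hgAdj : ∀ t, Adj (g t) (g (t+1)) := by
      intro t
      have h1 : g (t+1) = f (g t) := Function.iterate_succ_apply' f t i0
      rw [h1]
      exact (hf (g t) (hgD t)).1
    -- pigeonhole
    obtain ⟨a, b, hab, heq⟩ := Finite.exists_ne_map_eq_of_infinite g
    have hP : ∃ b, ∃ a < b, g a = g b := by
      rcases lt_or_gt_of_ne hab with h | h
      · exact ⟨b, a, h, heq⟩
      · exact ⟨a, b, h, heq.symm⟩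
    set b0 := Nat.find hP with hb0def
    obtain ⟨a0, ha0b0, hgab⟩ := Nat.find_spec hP
    set m := b0 - a0 with hmdef
    have hm : 0 < m := Nat.sub_pos_of_lt ha0b0
    have hgper : g (a0 + m) = g a0 := by
      have : a0 + m = b0 := by omega
      rw [this, hgab]
    set u : Fin m → Fin n := fun i => g (a0 + i.1) with hudef
    apply hS
    refine ⟨m, hm, u, ?_, ?_, ?_⟩
    · intro i j hij
      by_contra hne
      have hne' : i.1 ≠ j.1 := fun h => hne (Fin.ext h)
      have hgen : ∀ s t : ℕ, s < t → t < m → g (a0 + s) ≠ g (a0 + t) := by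
        intro s t hst htm hgeq
        have : a0 + t < b0 := by omega
        exact absurd ⟨a0 + s, by omega, hgeq⟩ (Nat.find_min hP this)
      rcases lt_or_gt_of_ne hne' with h | h
      · exact hgen i.1 j.1 h j.2 hij
      · exact hgen j.1 i.1 h i.2 hij.symm
    · intro i
      exact hDS _ (hgD _)
    · intro i
      by_cases hlast : i.1 + 1 < m
      · have : (i.1 + 1) % m = i.1 + 1 := Nat.mod_eq_of_lt hlast
        have hu : u ⟨(i.1 + 1) % m, Nat.mod_lt _ hm⟩ = g (a0 + i.1 + 1) := by
          simp only [hudef, this]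
          congr 1 <;> omega
        rw [hu]
        exact hgAdj (a0 + i.1)
      · have hieq : i.1 + 1 = m := by omega
        have : (i.1 + 1) % m = 0 := by rw [hieq]; exact Nat.mod_self m
        have hu : u ⟨(i.1 + 1) % m, Nat.mod_lt _ hm⟩ = g (a0 + i.1 + 1) := by
          simp only [hudef, this]
          have h2 : a0 + i.1 + 1 = a0 + m := by omega
          rw [h2, hgper]
          norm_num
        rw [hu]
        exact hgAdj (a0 + i.1)
  -- injectivity into restrictions on S
  set F : C → (S → A) := fun x s => x.1 s.1 with hFdef
  have hFinj : Function.Injective F := by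
    intro x y hxy
    apply Subtype.ext
    apply key x.1 x.2 y.1 y.2
    intro s hs
    exact congrFun hxy ⟨s, hs⟩
  have h1 : C.ncard = Nat.card C := (Nat.card_coe_set_eq C).symm
  rw [h1]
  calc Nat.card C ≤ Nat.card (S → A) := Nat.card_le_card_of_injective F hFinj
    _ = q ^ S.card := by
        rw [Nat.card_eq_fintype_card, Fintype.card_fun, hA, Fintype.card_coe]
end

section
/- Let G be a finite directed graph (with no loops) on the vertex set {1,…,n} and let q ≥ 2 be an integer. If G contains t pairwise vertex-disjoint directed cycles, then there exists an RDSS code C for G over an alphabet A with |A| = q such that |C| ≥ q^{t}. -/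
/-- if a directed graph contains `t` pairwise vertex-disjoint
directed cycles (the `k`-th cycle being `u k 0, …, u k (m k - 1)`), then there
is an RDSS code over an alphabet of size `q` of size at least `q ^ t`. -/
theorem stmt4 {n q t : ℕ} (hn : 1 ≤ n) (hq : 2 ≤ q) {A : Type} [Fintype A]
    (hA : Fintype.card A = q)
    (Adj : Fin n → Fin n → Prop) (hirr : ∀ i, ¬ Adj i i)
    (m : Fin t → ℕ) (hm : ∀ k, 0 < m k)
    (u : (k : Fin t) → Fin (m k) → Fin n)
    (hinj : ∀ k, Function.Injective (u k))
    (hcyc : ∀ k, ∀ i : Fin (m k), Adj (u k i) (u k ⟨(i.1 + 1) % m k, Nat.mod_lt _ (hm k)⟩))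
    (hdisj : ∀ k k', k ≠ k' → ∀ i j, u k i ≠ u k' j) :
    ∃ C : Set (Fin n → A), IsRDSS Adj C ∧ q ^ t ≤ C.ncard := by
  classical
  have hAne : Nonempty A := by
    rw [← Fintype.card_pos_iff, hA]; omega
  obtain ⟨a₀⟩ := hAne
  set F : (Fin t → A) → (Fin n → A) := fun a j =>
    if h : ∃ k, ∃ i, u k i = j then a h.choose else a₀ with hF
  have key : ∀ (a : Fin t → A) (k : Fin t) (i : Fin (m k)), F a (u k i) = a k := by
    intro a k i
    have h : ∃ k', ∃ i', u k' i' = u k i := ⟨k, i, rfl⟩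
    have hc := h.choose_spec
    obtain ⟨i', hi'⟩ := hc
    have hkk : h.choose = k := by
      by_contra hne
      exact hdisj _ _ hne i' i hi'
    simp only [hF, dif_pos h, hkk]
  have hFinj : Function.Injective F := by
    intro a b hab
    funext k
    have := congrFun hab (u k ⟨0, hm k⟩)
    rwa [key, key] at this
  refine ⟨Set.range F, ?_, ?_⟩
  · intro i x hx y hy hagree
    obtain ⟨a, rfl⟩ := hx
    obtain ⟨b, rfl⟩ := hy
    by_cases h : ∃ k, ∃ p, u k p = i
    · obtain ⟨k, p, rfl⟩ := h
      have hadj := hcyc k p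
      have := hagree _ hadj
      rw [key, key]
      rwa [key, key] at this
    · simp only [hF, dif_neg h]
  · have : (Set.range F).ncard = q ^ t := by
      rw [← Nat.card_coe_set_eq, Nat.card_range_of_injective hFinj, Nat.card_eq_fintype_card,
        Fintype.card_fun, hA, Fintype.card_fin]
    omega
end

section
/- Let G be a finite directed graph on the vertex set {1,…,n}, let A be an alphabet with |A| = q ≥ 2, and suppose there exists an index code for G over A with a finite message set M of size m. Then there exists an RDSS code C for G over A with |C| ≥ q^n / m. -/
/-- if there is an index code for `G` over `A` with message set `M`
of size `m`, then there is an RDSS code `C` for `G` over `A` with `|C| ≥ q^n / m`. -/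
theorem stmt5 {n q m : ℕ} (hn : 1 ≤ n) (hq : 2 ≤ q) {A : Type} [Fintype A]
    (hA : Fintype.card A = q)
    (Adj : Fin n → Fin n → Prop) (hirr : ∀ i, ¬ Adj i i)
    {M : Type} [Fintype M] (hM : Fintype.card M = m)
    (f : (Fin n → A) → M)
    (g : (i : Fin n) → M → ({j : Fin n // Adj i j} → A) → A)
    (hg : ∀ y : Fin n → A, ∀ i : Fin n, g i (f y) (fun j => y j.1) = y i) :
    ∃ C : Set (Fin n → A), IsRDSS Adj C ∧ (q : ℝ) ^ n / (m : ℝ) ≤ (C.ncard : ℝ) := by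
  classical
  have hApos : 0 < Fintype.card A := by omega
  have hAne : Nonempty A := Fintype.card_pos_iff.mp hApos
  have hYne : Nonempty (Fin n → A) := inferInstance
  have hMne : Nonempty M := ⟨f (Classical.arbitrary _)⟩
  have hmpos : 0 < m := by rw [← hM]; exact Fintype.card_pos
  -- pick μ maximizing fiber size
  obtain ⟨μ, -, hmax⟩ := Finset.exists_max_image (Finset.univ : Finset M)
    (fun μ => (Finset.univ.filter (fun y : Fin n → A => f y = μ)).card)
    ⟨Classical.arbitrary M, Finset.mem_univ _⟩
  set F : Finset (Fin n → A) := Finset.univ.filter (fun y => f y = μ) with hF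
  have hcard : q ^ n ≤ m * F.card := by
    have h1 : (Finset.univ : Finset (Fin n → A)).card =
        ∑ μ' : M, (Finset.univ.filter (fun y : Fin n → A => f y = μ')).card :=
      Finset.card_eq_sum_card_fiberwise (fun x _ => Finset.mem_univ (f x))
    have h2 : ∑ μ' : M, (Finset.univ.filter (fun y : Fin n → A => f y = μ')).card ≤
        m * F.card := by
      rw [← hM, Fintype.card, ← smul_eq_mul]
      exact Finset.sum_le_card_nsmul _ _ _ (fun μ' _ => hmax μ' (Finset.mem_univ _))
    have h3 : (Finset.univ : Finset (Fin n → A)).card = q ^ n := by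
      simp [Finset.card_univ, Fintype.card_fun, hA]
    omega
  refine ⟨(F : Set (Fin n → A)), ?_, ?_⟩
  · intro i x hx y hy hagree
    simp only [hF, Finset.coe_filter, Set.mem_setOf_eq, Finset.mem_univ, true_and,
      Finset.mem_coe, Finset.mem_filter] at hx hy
    have hx' := hg x i
    have hy' := hg y i
    rw [← hx', ← hy', hx, hy]
    congr 1
    funext j
    exact hagree j.1 j.2
  · rw [Set.ncard_coe_finset]
    rw [div_le_iff₀ (by exact_mod_cast hmpos)]
    calc ((q : ℝ)) ^ n ≤ (m * F.card : ℕ) := by exact_mod_cast hcard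
      _ = (F.card : ℝ) * m := by push_cast; ring
end

section
/- Let G be a finite directed graph on the vertex set {1,…,n}, let q ≥ 2 be an integer, and let C ⊆ (ZMod q)^n be a nonempty RDSS code for G over ZMod q. Then there exists an index code for G over ZMod q whose message set M has size |M| ≤ ⌈(q^n / |C|) · min{ n·ln q, 1 + ln |C| }⌉. -/
open Finset Real

theorem one_sub_pow_le_exp_neg_mul {x : ℝ} (hx : x ≤ 1) (t : ℕ) :
    (1 - x) ^ t ≤ exp (-(x * t)) :=
  calc (1 - x) ^ t ≤ exp (-x) ^ t := pow_le_pow_left₀ (by linarith) (one_sub_le_exp_neg x) t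
    _ = exp (-(x * t)) := by rw [← exp_nat_mul]; ring_nf

theorem one_sub_pow_lt_exp_neg_mul {x : ℝ} (hx₀ : x ≠ 0) (hx : x ≤ 1) {t : ℕ} (ht : t ≠ 0) :
    (1 - x) ^ t < exp (-(x * t)) :=
  calc (1 - x) ^ t < exp (-x) ^ t := pow_lt_pow_left₀ (one_sub_lt_exp_neg hx₀) (by linarith) ht
    _ = exp (-(x * t)) := by rw [← exp_nat_mul]; ring_nf

theorem exp_neg_div_mul_le_inv {K N b : ℝ} {t : ℕ} (hK : 0 < K) (hN : 0 < N) (hb : 0 < b)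
    (ht : N / K * log b ≤ t) : exp (-(K / N * t)) ≤ b⁻¹ := by
  have hlog : log b ≤ K / N * t := by
    rw [div_mul_eq_mul_div, le_div_iff₀ hN]
    rw [div_mul_eq_mul_div, div_le_iff₀ hK] at ht
    linarith
  calc exp (-(K / N * t)) ≤ exp (-log b) := exp_le_exp.2 (neg_le_neg hlog)
    _ = b⁻¹ := by rw [exp_neg, exp_log hb]

section Covering

variable {X : Type*} [AddGroup X] [Fintype X] [DecidableEq X]

theorem card_filter_sub_mem (F : Finset X) (y : X) : #{v | y - v ∈ F} = #F :=
  card_equiv (Equiv.subLeft y) (by simp)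

theorem sum_card_filter_sub_mem (U F : Finset X) :
    ∑ v, #{y ∈ U | y - v ∈ F} = #U * #F := by
  simp only [card_filter]
  rw [sum_comm]
  simp only [← card_filter, card_filter_sub_mem, sum_const, smul_eq_mul]

theorem exists_card_mul_le_card_mul_card_filter_sub_mem [Nonempty X] (U F : Finset X) :
    ∃ v, #U * #F ≤ Fintype.card X * #{y ∈ U | y - v ∈ F} := by
  obtain ⟨v, -, hv⟩ := exists_le_of_sum_le (s := univ) (f := fun _ => #U * #F)
    (g := fun v => Fintype.card X * #{y ∈ U | y - v ∈ F}) univ_nonempty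
    (by rw [sum_const, card_univ, smul_eq_mul, ← mul_sum, sum_card_filter_sub_mem])
  exact ⟨v, hv⟩

theorem exists_card_filter_forall_sub_notMem_le [Nonempty X] (F : Finset X) (t : ℕ)
    (U : Finset X) :
    ∃ S : Finset X, #S ≤ t ∧
      (#{y ∈ U | ∀ v ∈ S, y - v ∉ F} : ℝ) ≤ #U * (1 - #F / Fintype.card X) ^ t := by
  have hN : (0 : ℝ) < Fintype.card X := by exact_mod_cast Fintype.card_pos
  have hr : 0 ≤ 1 - (#F : ℝ) / Fintype.card X := by
    rw [sub_nonneg, div_le_one hN]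
    exact_mod_cast card_le_univ F
  induction t generalizing U with
  | zero => exact ⟨∅, le_rfl, by simp⟩
  | succ t ih =>
    obtain ⟨v, hv⟩ := exists_card_mul_le_card_mul_card_filter_sub_mem U F
    have hsplit := card_filter_add_card_filter_not (s := U) (fun y => y - v ∈ F)
    have hv' : (#U : ℝ) * #F ≤ Fintype.card X * #{y ∈ U | y - v ∈ F} := by exact_mod_cast hv
    have hU' : (#{y ∈ U | y - v ∉ F} : ℝ) ≤ #U * (1 - #F / Fintype.card X) := by
      have : (#U : ℝ) * (#F / Fintype.card X) ≤ #{y ∈ U | y - v ∈ F} := by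
        rw [← mul_div_assoc, div_le_iff₀ hN]
        linarith
      have hsplit' : (#{y ∈ U | y - v ∈ F} : ℝ) + #{y ∈ U | y - v ∉ F} = #U := by
        exact_mod_cast hsplit
      linarith
    obtain ⟨S, hSt, hS⟩ := ih {y ∈ U | y - v ∉ F}
    refine ⟨insert v S, (card_insert_le v S).trans (by omega), ?_⟩
    have hfilter : {y ∈ U | ∀ w ∈ insert v S, y - w ∉ F}
        = {y ∈ {y ∈ U | y - v ∉ F} | ∀ w ∈ S, y - w ∉ F} := by
      ext y
      simp only [mem_filter, forall_mem_insert, and_assoc]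
    rw [hfilter, pow_succ']
    calc _ ≤ (#{y ∈ U | y - v ∉ F} : ℝ) * (1 - #F / Fintype.card X) ^ t := hS
      _ ≤ #U * (1 - #F / Fintype.card X) * (1 - #F / Fintype.card X) ^ t := by gcongr
      _ = _ := by ring

theorem exists_forall_sub_mem_card_le_log_card [Nontrivial X] {F : Finset X} (hF : F.Nonempty) :
    ∃ S : Finset X, (∀ y, ∃ v ∈ S, y - v ∈ F) ∧
      #S ≤ ⌈(Fintype.card X : ℝ) / #F * log (Fintype.card X)⌉₊ := by
  set N : ℝ := (Fintype.card X : ℝ)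
  have hN : 1 < N := Nat.one_lt_cast.2 Fintype.one_lt_card
  have hK : (0 : ℝ) < #F := by exact_mod_cast hF.card_pos
  have hKN : (#F : ℝ) / N ≤ 1 := (div_le_one (by linarith)).2 (Nat.cast_le.2 (card_le_univ F))
  set t := ⌈N / #F * log N⌉₊
  have ht : t ≠ 0 := by
    have := log_pos hN
    exact Nat.pos_iff_ne_zero.1 (Nat.one_le_ceil_iff.2 (by positivity))
  obtain ⟨S, hSt, hS⟩ := exists_card_filter_forall_sub_notMem_le F t univ
  have hL : (#{y | ∀ v ∈ S, y - v ∉ F} : ℝ) < 1 :=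
    calc _ ≤ N * (1 - #F / N) ^ t := by rwa [card_univ] at hS
      _ < N * exp (-(#F / N * t)) := by
        gcongr
        exact one_sub_pow_lt_exp_neg_mul (by positivity) hKN ht
      _ ≤ N * N⁻¹ := by
        gcongr
        exact exp_neg_div_mul_le_inv hK (by linarith) (by linarith) (Nat.le_ceil _)
      _ = 1 := mul_inv_cancel₀ (by linarith)
  have hempty := filter_eq_empty_iff.1 (card_eq_zero.1 (Nat.lt_one_iff.1 (by exact_mod_cast hL)))
  refine ⟨S, fun y => ?_, hSt⟩
  simpa using hempty (mem_univ y)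

theorem exists_forall_sub_mem_card_le_one_add_log_card {F : Finset X} (hF : F.Nonempty) :
    ∃ S : Finset X, (∀ y, ∃ v ∈ S, y - v ∈ F) ∧
      #S ≤ ⌈(Fintype.card X : ℝ) / #F * (1 + log #F)⌉₊ := by
  have : Nonempty X := ⟨hF.choose⟩
  set N : ℝ := (Fintype.card X : ℝ)
  have hK : (1 : ℝ) ≤ #F := by exact_mod_cast hF.card_pos
  have hKN : (#F : ℝ) / N ≤ 1 :=
    (div_le_one (Nat.cast_pos.2 Fintype.card_pos)).2 (Nat.cast_le.2 (card_le_univ F))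
  set t := ⌈N / #F * log #F⌉₊
  obtain ⟨S, hSt, hS⟩ := exists_card_filter_forall_sub_notMem_le F t univ
  set L : Finset X := {y | ∀ v ∈ S, y - v ∉ F}
  have hL : (#L : ℝ) ≤ N / #F :=
    calc _ ≤ N * (1 - #F / N) ^ t := by rwa [card_univ] at hS
      _ ≤ N * exp (-(#F / N * t)) := by
        gcongr
        exact one_sub_pow_le_exp_neg_mul hKN t
      _ ≤ N * (#F : ℝ)⁻¹ := by
        gcongr
        exact exp_neg_div_mul_le_inv (by linarith) (by positivity) (by linarith) (Nat.le_ceil _)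
      _ = N / #F := rfl
  obtain ⟨c, hc⟩ := hF
  refine ⟨S ∪ L.image (-c + ·), fun y => ?_, ?_⟩
  · by_cases hy : y ∈ L
    · exact ⟨-c + y, mem_union_right _ (mem_image_of_mem _ hy), by simpa [sub_eq_add_neg]⟩
    · simp only [L, mem_filter, mem_univ, true_and, not_forall, not_not] at hy
      obtain ⟨v, hv, hvF⟩ := hy
      exact ⟨v, mem_union_left _ hv, hvF⟩
  · have hlog : 0 ≤ N / #F * log #F := mul_nonneg (by positivity) (log_nonneg hK)
    calc #(S ∪ L.image (-c + ·)) ≤ t + #L :=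
          (card_union_le _ _).trans (add_le_add hSt card_image_le)
      _ = ⌈N / #F * log #F + #L⌉₊ := (Nat.ceil_add_natCast hlog _).symm
      _ ≤ ⌈N / #F * (1 + log #F)⌉₊ := Nat.ceil_mono (by rw [mul_add, mul_one]; linarith)

theorem exists_forall_sub_mem_card_le_min [Nontrivial X] {F : Finset X} (hF : F.Nonempty) :
    ∃ S : Finset X, (∀ y, ∃ v ∈ S, y - v ∈ F) ∧
      #S ≤ ⌈(Fintype.card X : ℝ) / #F * min (log (Fintype.card X)) (1 + log #F)⌉₊ := by
  rcases min_choice (log (Fintype.card X : ℝ)) (1 + log #F) with h | h <;> rw [h]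
  exacts [exists_forall_sub_mem_card_le_log_card hF,
    exists_forall_sub_mem_card_le_one_add_log_card hF]

end Covering

theorem IsRDSS.exists_indexCode {n : ℕ} {A : Type*} [AddGroup A] {Adj : Fin n → Fin n → Prop}
    {C : Set (Fin n → A)} (hC : IsRDSS Adj C) (S : Finset (Fin n → A))
    (hS : ∀ y, ∃ v ∈ S, y - v ∈ C) :
    ∃ (f : (Fin n → A) → S) (g : (i : Fin n) → S → ({j // Adj i j} → A) → A),
      ∀ y i, g i (f y) (fun j => y j.1) = y i := by
  classical
  choose v hvS hvC using hS
  refine ⟨fun y => ⟨v y, hvS y⟩, fun i m d =>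
    if h : ∃ x ∈ C, ∀ j : {j // Adj i j}, x j = d j - m.1 j then h.choose i + m.1 i else 0, ?_⟩
  intro y i
  have hex : ∃ x ∈ C, ∀ j : {j // Adj i j}, x j = y j - v y j :=
    ⟨y - v y, hvC y, fun _ => rfl⟩
  obtain ⟨hxC, hx⟩ := hex.choose_spec
  simp only [dif_pos hex]
  rw [hC i _ hxC _ (hvC y) fun j hj => hx ⟨j, hj⟩, Pi.sub_apply, sub_add_cancel]

theorem stmt6_general {n q : ℕ} (hn : 1 ≤ n) (hq : 2 ≤ q)
    (Adj : Fin n → Fin n → Prop)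
    (C : Set (Fin n → ZMod q)) (hC : IsRDSS Adj C) (hne : C.Nonempty) :
    ∃ (M : Type) (hFM : Fintype M)
      (f : (Fin n → ZMod q) → M)
      (g : (i : Fin n) → M → ({j : Fin n // Adj i j} → ZMod q) → ZMod q),
      (∀ y : Fin n → ZMod q, ∀ i : Fin n, g i (f y) (fun j => y j.1) = y i) ∧
      @Fintype.card M hFM ≤
        ⌈((q : ℝ) ^ n / (C.ncard : ℝ)) *
          min ((n : ℝ) * Real.log q) (1 + Real.log (C.ncard : ℝ))⌉₊ := by
  classical
  have : Fact (1 < q) := ⟨hq⟩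
  have : Nonempty (Fin n) := ⟨⟨0, hn⟩⟩
  obtain ⟨S, hS, hScard⟩ := exists_forall_sub_mem_card_le_min (X := Fin n → ZMod q)
    (F := C.toFinset) (by simpa using hne)
  obtain ⟨f, g, hfg⟩ := hC.exists_indexCode S (by simpa using hS)
  refine ⟨S, inferInstance, f, g, hfg, ?_⟩
  have hcard : (Fintype.card (Fin n → ZMod q) : ℝ) = q ^ n := by simp
  rw [Fintype.card_coe, Set.ncard_eq_toFinset_card', ← log_pow, ← hcard]
  exact hScard

/-- from a nonempty RDSS code `C` for a directed graph `G` over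
`ZMod q` one gets an index code for `G` whose message set `M` satisfies
`|M| ≤ ⌈(q^n/|C|) · min(n ln q, 1 + ln |C|)⌉`. -/
theorem stmt6 {n q : ℕ} (hn : 1 ≤ n) (hq : 2 ≤ q)
    (Adj : Fin n → Fin n → Prop) (hirr : ∀ i, ¬ Adj i i)
    (C : Set (Fin n → ZMod q)) (hC : IsRDSS Adj C) (hne : C.Nonempty) :
    ∃ (M : Type) (hFM : Fintype M)
      (f : (Fin n → ZMod q) → M)
      (g : (i : Fin n) → M → ({j : Fin n // Adj i j} → ZMod q) → ZMod q),
      (∀ y : Fin n → ZMod q, ∀ i : Fin n, g i (f y) (fun j => y j.1) = y i) ∧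
      @Fintype.card M hFM ≤
        ⌈((q : ℝ) ^ n / (C.ncard : ℝ)) *
          min ((n : ℝ) * Real.log q) (1 + Real.log (C.ncard : ℝ))⌉₊ :=
  stmt6_general hn hq Adj C hC hne
end

section
/- Let G be a finite simple undirected graph on the vertex set {1,…,n}, let q ≥ 2 and k ≥ 1 be integers, and let C be an RDSS code for G over an alphabet A with |A| = q such that |C| ≥ q^k and the Hamming distance between any two distinct codewords of C is at least d. Then for every independent set U of G with |N(U)| ≤ k − 1, where N(U) = (∪_{u ∈ U} N(u)) ∖ U, one has d ≤ n − k + 1 − |U|. -/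
/-!
Let `N = N(U)`, of size `t ≤ k - 1`. By pigeonhole some `q^(k-t)` codewords agree on `N`;
since `U` is independent, every neighbour of a vertex of `U` lies in `N`, so by recoverability
these codewords also agree on `U`. They thus form a code of minimum distance `≥ d` that is
constant on `U ∪ N`, and the Singleton bound on the remaining `n - |U| - t` coordinates gives
`q^(k-t) ≤ q^(n-|U|-t-d+1)`.
-/

open Finset

section CodesAgreeingOnASet

variable {ι A : Type*}

theorem hammingDist_le_card_of_eqOn_compl [Fintype ι] [DecidableEq A] {x y : ι → A}
    {T : Finset ι} (h : ∀ i ∉ T, x i = y i) : hammingDist x y ≤ #T :=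
  card_le_card fun i hi => by
    by_contra hiT
    exact (mem_filter.mp hi).2 (h i hiT)

theorem card_le_pow_card_of_eqOn_imp_eq [Fintype A] {D : Finset (ι → A)} (S : Finset ι)
    (hS : ∀ x ∈ D, ∀ y ∈ D, (∀ i ∈ S, x i = y i) → x = y) :
    #D ≤ Fintype.card A ^ #S := by
  classical
  calc #D ≤ #(univ : Finset (S → A)) :=
        card_le_card_of_injOn (fun x (i : S) => x i) (fun _ _ => mem_univ _)
          fun x hx y hy hxy => hS x hx y hy fun i hi => congrFun hxy ⟨i, hi⟩
    _ = Fintype.card A ^ #S := by simp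

theorem card_le_pow_of_eqOn_of_le_hammingDist [Fintype ι] [Fintype A] [DecidableEq ι]
    [DecidableEq A] {D : Finset (ι → A)} {W : Finset ι} {d : ℕ}
    (hW : ∀ x ∈ D, ∀ y ∈ D, ∀ i ∈ W, x i = y i)
    (hd : ∀ x ∈ D, ∀ y ∈ D, x ≠ y → d ≤ hammingDist x y) :
    #D ≤ Fintype.card A ^ (Fintype.card ι - #W - (d - 1)) := by
  -- Puncture at `d - 1` coordinates `T` outside `W` (all of `Wᶜ` if there are fewer): two
  -- codewords agreeing outside `T` are at distance `≤ d - 1`, hence equal.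
  obtain ⟨T, hTW, hT⟩ :=
    exists_subset_card_eq (s := Wᶜ) (n := min (d - 1) #Wᶜ) (min_le_right _ _)
  have hS : #(Wᶜ \ T) = Fintype.card ι - #W - (d - 1) := by
    rw [card_sdiff_of_subset hTW, hT, card_compl]
    omega
  rw [← hS]
  refine card_le_pow_card_of_eqOn_imp_eq _ fun x hx y hy hxy => ?_
  by_contra hne
  have hxyT : hammingDist x y ≤ #T := hammingDist_le_card_of_eqOn_compl fun i hiT => by
    by_cases hiW : i ∈ W
    · exact hW x hx y hy i hiW
    · exact hxy i (mem_sdiff.mpr ⟨mem_compl.mpr hiW, hiT⟩)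
  have hdxy := hd x hx y hy hne
  have hpos := hammingDist_pos.mpr hne
  omega

theorem exists_subset_eqOn_le_card [Fintype A] [Nonempty A] (D : Finset (ι → A))
    (W : Finset ι) {m : ℕ} (h : Fintype.card A ^ #W * m ≤ #D) :
    ∃ D' ⊆ D, (∀ x ∈ D', ∀ y ∈ D', ∀ i ∈ W, x i = y i) ∧ m ≤ #D' := by
  classical
  obtain ⟨b, -, hb⟩ := exists_le_card_fiber_of_mul_le_card_of_maps_to
    (s := D) (f := fun (x : ι → A) (i : W) => x i) (t := univ)
    (fun _ _ => mem_univ _) univ_nonempty (by simpa using h)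
  refine ⟨_, filter_subset _ D, fun x hx y hy i hi => ?_, hb⟩
  exact congrFun ((mem_filter.mp hx).2.trans (mem_filter.mp hy).2.symm) ⟨i, hi⟩

end CodesAgreeingOnASet

theorem IsRDSS.eqOn_of_eqOn_outerNbhd {n : ℕ} {A : Type*} {Adj : Fin n → Fin n → Prop}
    {C : Set (Fin n → A)} (hC : IsRDSS Adj C) {U : Set (Fin n)}
    (hU : ∀ u ∈ U, ∀ v ∈ U, ¬ Adj u v) {x y : Fin n → A} (hx : x ∈ C) (hy : y ∈ C)
    (hxy : ∀ v ∈ {v : Fin n | v ∉ U ∧ ∃ u ∈ U, Adj u v}, x v = y v) :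
    ∀ u ∈ U, x u = y u :=
  fun u hu => hC u x hx y hy fun v huv => hxy v ⟨fun hv => hU u hu v hv huv, u, hu, huv⟩

theorem stmt13_general {n q k d : ℕ} (hq : 2 ≤ q) (hk : 1 ≤ k)
    {A : Type} [Fintype A] [DecidableEq A] (hA : Fintype.card A = q)
    (G : SimpleGraph (Fin n))
    (C : Set (Fin n → A)) (hC : IsRDSS G.Adj C)
    (hsize : q ^ k ≤ C.ncard)
    (hdist : ∀ x ∈ C, ∀ y ∈ C, x ≠ y → d ≤ hammingDist x y)
    (U : Set (Fin n)) (hU : ∀ u ∈ U, ∀ v ∈ U, ¬ G.Adj u v)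
    (hNU : ({v : Fin n | v ∉ U ∧ ∃ u ∈ U, G.Adj u v}).ncard ≤ k - 1) :
    (d : ℤ) ≤ (n : ℤ) - (k : ℤ) + 1 - (U.ncard : ℤ) := by
  classical
  set N : Set (Fin n) := {v | v ∉ U ∧ ∃ u ∈ U, G.Adj u v}
  have : Nonempty A := Fintype.card_pos_iff.mp (by omega)
  rw [Set.ncard_eq_toFinset_card'] at hsize hNU ⊢
  obtain ⟨D, hDC, hDN, hDcard⟩ := exists_subset_eqOn_le_card C.toFinset N.toFinset
    (m := q ^ (k - #N.toFinset))
    (by rw [hA, ← pow_add, Nat.add_sub_cancel' (by omega)]; exact hsize)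
  have hDC' : ∀ x ∈ D, x ∈ C := fun x hx => Set.mem_toFinset.mp (hDC hx)
  have hDW : ∀ x ∈ D, ∀ y ∈ D, ∀ i ∈ U.toFinset ∪ N.toFinset, x i = y i := by
    intro x hx y hy i hi
    rcases mem_union.mp hi with hiU | hiN
    · exact hC.eqOn_of_eqOn_outerNbhd hU (hDC' x hx) (hDC' y hy)
        (fun v hv => hDN x hx y hy v (Set.mem_toFinset.mpr hv)) i (Set.mem_toFinset.mp hiU)
    · exact hDN x hx y hy i hiN
  have hsingleton := card_le_pow_of_eqOn_of_le_hammingDist hDW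
    fun x hx y hy => hdist x (hDC' x hx) y (hDC' y hy)
  have hUN : Disjoint U.toFinset N.toFinset :=
    Set.disjoint_toFinset.mpr <| Set.disjoint_left.mpr fun _ hu hN => hN.1 hu
  rw [card_union_of_disjoint hUN, hA, Fintype.card_fin] at hsingleton
  have hexp := (Nat.pow_le_pow_iff_right hq).mp (hDcard.trans hsingleton)
  omega

/-- if an RDSS code for `G` of minimum distance `d` has size at
least `q^k`, then for every independent set `U` of `G` with `|N(U)| ≤ k − 1`,
`d ≤ n − k + 1 − |U|`. -/
theorem stmt13 {n q k d : ℕ} (hn : 1 ≤ n) (hq : 2 ≤ q) (hk : 1 ≤ k)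
    {A : Type} [Fintype A] [DecidableEq A] (hA : Fintype.card A = q)
    (G : SimpleGraph (Fin n))
    (C : Set (Fin n → A)) (hC : IsRDSS G.Adj C)
    (hsize : q ^ k ≤ C.ncard)
    (hdist : ∀ x ∈ C, ∀ y ∈ C, x ≠ y → d ≤ hammingDist x y)
    (U : Set (Fin n)) (hU : ∀ u ∈ U, ∀ v ∈ U, ¬ G.Adj u v)
    (hNU : ({v : Fin n | v ∉ U ∧ ∃ u ∈ U, G.Adj u v}).ncard ≤ k - 1) :
    (d : ℤ) ≤ (n : ℤ) - (k : ℤ) + 1 - (U.ncard : ℤ) :=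
  stmt13_general hq hk hA G C hC hsize hdist U hU hNU
end

section
/- Let G be a finite simple undirected graph on the vertex set {1,…,n}, let q ≥ 2 be an integer, and let C be an RDSS code for G over an alphabet A with |A| = q such that the Hamming distance between any two distinct codewords of C is at least d. Then for every independent set U of G, |C| ≤ q^{|N(U)|} · A_q(n − |U ∪ N(U)|, d), where N(U) = (∪_{u ∈ U} N(u)) ∖ U and A_q(m, d) denotes the maximum size of a set C' ⊆ A^m in which any two distinct elements have Hamming distance at least d. -/
/-- `maxCode A m d` is `A_q(m, d)`: the maximum size of a code of length `m`
over alphabet `A` with pairwise Hamming distance at least `d`. -/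
noncomputable def maxCode (A : Type) [Fintype A] [DecidableEq A] (m d : ℕ) : ℕ :=
  sSup {c : ℕ | ∃ C' : Finset (Fin m → A),
    (∀ x ∈ C', ∀ y ∈ C', x ≠ y → d ≤ hammingDist x y) ∧ C'.card = c}

/-- alphabet-dependent bound: for any RDSS code `C` of minimum
distance `d` for `G` and any independent set `U`,
`|C| ≤ q^{|N(U)|} · A_q(n − |U ∪ N(U)|, d)`. -/
theorem stmt14 {n q d : ℕ} (hn : 1 ≤ n) (hq : 2 ≤ q)
    {A : Type} [Fintype A] [DecidableEq A] (hA : Fintype.card A = q)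
    (G : SimpleGraph (Fin n))
    (C : Set (Fin n → A)) (hC : IsRDSS G.Adj C)
    (hdist : ∀ x ∈ C, ∀ y ∈ C, x ≠ y → d ≤ hammingDist x y)
    (U : Set (Fin n)) (hU : ∀ u ∈ U, ∀ v ∈ U, ¬ G.Adj u v) :
    C.ncard ≤ q ^ ({v : Fin n | v ∉ U ∧ ∃ u ∈ U, G.Adj u v}).ncard *
      maxCode A (n - (U ∪ {v : Fin n | v ∉ U ∧ ∃ u ∈ U, G.Adj u v}).ncard) d := by
  classical
  set S : Set (Fin n) := {v : Fin n | v ∉ U ∧ ∃ u ∈ U, G.Adj u v} with hSdef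
  set m : ℕ := n - (U ∪ S).ncard with hmdef
  -- the "rest" coordinates
  set T : Set (Fin n) := (U ∪ S)ᶜ with hTdef
  have hncard : ∀ (s : Set (Fin n)) (_ : Fintype s), s.ncard = Fintype.card s := by
    intro s hs
    rw [← Nat.card_coe_set_eq, Nat.card_eq_fintype_card]
  have hcardT : Fintype.card T = m := by
    have h1 : (U ∪ S).ncard + T.ncard = n := by
      rw [hTdef, Set.ncard_add_ncard_compl, Nat.card_eq_fintype_card, Fintype.card_fin]
    have h2 : T.ncard = Fintype.card T := hncard T _
    omega
  let e : T ≃ Fin m := Fintype.equivFinOfCardEq hcardT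
  let r : (Fin n → A) → (Fin m → A) := fun x k => x (e.symm k : Fin n)
  -- neighbors of U lie in S
  have hnbr : ∀ u ∈ U, ∀ v : Fin n, G.Adj u v → v ∈ S := by
    intro u hu v hv
    refine ⟨fun hvU => hU u hu v hvU hv, u, hu, hv⟩
  -- agreement on S implies agreement on U ∪ S
  have hagree : ∀ x ∈ C, ∀ y ∈ C, (∀ v ∈ S, x v = y v) →
      ∀ i : Fin n, i ∈ U ∪ S → x i = y i := by
    intro x hx y hy ha i hi
    rcases hi with hiU | hiS
    · exact hC i x hx y hy (fun j hj => ha j (hnbr i hiU j hj))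
    · exact ha i hiS
  -- distance is preserved by restriction to T, for codewords agreeing on S
  have hdistle : ∀ x ∈ C, ∀ y ∈ C, (∀ v ∈ S, x v = y v) →
      hammingDist x y ≤ hammingDist (r x) (r y) := by
    intro x hx y hy ha
    rw [hammingDist, hammingDist]
    refine le_trans (Finset.card_le_card ?_) (Finset.card_image_le
      (f := fun k : Fin m => (e.symm k : Fin n)))
    intro i hi
    rw [Finset.mem_filter] at hi
    have hiT : i ∈ T := by
      intro hmem
      exact hi.2 (hagree x hx y hy ha i hmem)
    refine Finset.mem_image.2 ⟨e ⟨i, hiT⟩, ?_, by simp⟩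
    rw [Finset.mem_filter]
    refine ⟨Finset.mem_univ _, ?_⟩
    simpa [r] using hi.2
  -- restriction to T is injective on codewords agreeing on S
  have hinj : ∀ x ∈ C, ∀ y ∈ C, (∀ v ∈ S, x v = y v) → r x = r y → x = y := by
    intro x hx y hy ha hr
    funext i
    by_cases hi : i ∈ U ∪ S
    · exact hagree x hx y hy ha i hi
    · have : r x (e ⟨i, hi⟩) = r y (e ⟨i, hi⟩) := by rw [hr]
      simpa [r] using this
  -- counting
  have hf : C.Finite := Set.toFinite C
  let Cf : Finset (Fin n → A) := hf.toFinset
  have hCf : ∀ x, x ∈ Cf ↔ x ∈ C := fun x => hf.mem_toFinset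
  let g0 : (Fin n → A) → (S → A) := fun x v => x v
  have hsum : Cf.card = ∑ a : S → A, (Cf.filter fun x => g0 x = a).card :=
    Finset.card_eq_sum_card_fiberwise (fun x _ => Finset.mem_univ (g0 x))
  have hM : ∀ a : S → A, (Cf.filter fun x => g0 x = a).card ≤ maxCode A m d := by
    intro a
    set F := Cf.filter fun x => g0 x = a with hF
    have hFC : ∀ x ∈ F, x ∈ C := by
      intro x hx
      exact (hCf x).1 (Finset.mem_filter.1 hx).1
    have hFS : ∀ x ∈ F, ∀ y ∈ F, ∀ v ∈ S, x v = y v := by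
      intro x hx y hy v hv
      have hx' := (Finset.mem_filter.1 hx).2
      have hy' := (Finset.mem_filter.1 hy).2
      exact congrFun (hx'.trans hy'.symm) ⟨v, hv⟩
    have hcardF : F.card = (F.image r).card := by
      rw [Finset.card_image_of_injOn]
      intro x hx y hy hr
      exact hinj x (hFC x hx) y (hFC y hy) (hFS x hx y hy) hr
    have hDmem : (F.image r).card ∈ {c : ℕ | ∃ C' : Finset (Fin m → A),
        (∀ x ∈ C', ∀ y ∈ C', x ≠ y → d ≤ hammingDist x y) ∧ C'.card = c} := by
      refine ⟨F.image r, ?_, rfl⟩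
      intro u hu v hv huv
      obtain ⟨x, hx, rfl⟩ := Finset.mem_image.1 hu
      obtain ⟨y, hy, rfl⟩ := Finset.mem_image.1 hv
      have hxy : x ≠ y := fun h => huv (by rw [h])
      exact le_trans (hdist x (hFC x hx) y (hFC y hy) hxy)
        (hdistle x (hFC x hx) y (hFC y hy) (hFS x hx y hy))
    have hbdd : BddAbove {c : ℕ | ∃ C' : Finset (Fin m → A),
        (∀ x ∈ C', ∀ y ∈ C', x ≠ y → d ≤ hammingDist x y) ∧ C'.card = c} := by
      refine ⟨Fintype.card (Fin m → A), ?_⟩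
      rintro c ⟨C', _, rfl⟩
      exact Finset.card_le_univ C'
    calc F.card = (F.image r).card := hcardF
      _ ≤ maxCode A m d := le_csSup hbdd hDmem
  have hcardfun : Fintype.card (S → A) = q ^ S.ncard := by
    rw [Fintype.card_fun, hA, hncard S _]
  calc C.ncard = Cf.card := Set.ncard_eq_toFinset_card C hf
    _ = ∑ a : S → A, (Cf.filter fun x => g0 x = a).card := hsum
    _ ≤ ∑ _a : S → A, maxCode A m d := Finset.sum_le_sum (fun a _ => hM a)
    _ = Fintype.card (S → A) * maxCode A m d := by
        rw [Finset.sum_const, Finset.card_univ, smul_eq_mul]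
    _ = q ^ S.ncard * maxCode A m d := by rw [hcardfun]
end

section
/- Let G be a finite simple undirected graph on the vertex set {1,…,n} in which every vertex has degree exactly r (r ≥ 1), let q ≥ 2 and k ≥ 1 be integers, and let C be an RDSS code for G over an alphabet A with |A| = q such that |C| ≥ q^k and the Hamming distance between any two distinct codewords of C is at least d. Then d ≤ n − k − ⌈k/r⌉ + 2. -/
set_option linter.unusedSectionVars false

namespace Stmt15Aux

variable {n : ℕ} {A : Type} [Fintype A] [DecidableEq A]

/-- projection of a word to coordinates in `W`. -/
def pj (W : Finset (Fin n)) (x : Fin n → A) : {i // i ∈ W} → A :=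
  fun i => x i.1

lemma pj_insert_card_le {q : ℕ} (hA : Fintype.card A = q)
    (CF : Finset (Fin n → A)) (W : Finset (Fin n)) (v : Fin n) :
    (CF.image (pj (insert v W))).card ≤ (CF.image (pj W)).card * q := by
  classical
  set h : ({i // i ∈ insert v W} → A) → ({i // i ∈ W} → A) × A :=
    fun y => (fun i => y ⟨i.1, Finset.mem_insert_of_mem i.2⟩,
      y ⟨v, Finset.mem_insert_self v W⟩) with hh
  have hinj : Function.Injective h := by
    intro y1 y2 hy
    funext i
    obtain ⟨i, hi⟩ := i
    rcases Finset.mem_insert.1 hi with h1 | h2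
    · subst h1; exact congrArg Prod.snd hy
    · exact congrFun (congrArg Prod.fst hy) ⟨i, h2⟩
  calc (CF.image (pj (insert v W))).card
      = ((CF.image (pj (insert v W))).image h).card :=
        (Finset.card_image_of_injective _ hinj).symm
    _ ≤ ((CF.image (pj W)) ×ˢ (Finset.univ : Finset A)).card := by
        apply Finset.card_le_card
        intro z hz
        simp only [Finset.mem_image] at hz
        obtain ⟨y, hy, rfl⟩ := hz
        obtain ⟨x, hx, rfl⟩ := hy
        refine Finset.mem_product.2 ⟨?_, Finset.mem_univ _⟩
        exact Finset.mem_image_of_mem _ hx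
    _ = (CF.image (pj W)).card * q := by
        rw [Finset.card_product, Finset.card_univ, hA]

lemma pj_free_card_le (CF : Finset (Fin n → A)) (W : Finset (Fin n)) (v : Fin n)
    (hfree : ∀ x ∈ CF, ∀ y ∈ CF, (∀ j ∈ W, x j = y j) → x v = y v) :
    (CF.image (pj (insert v W))).card ≤ (CF.image (pj W)).card := by
  classical
  set ρ : ({i // i ∈ insert v W} → A) → ({i // i ∈ W} → A) :=
    fun y i => y ⟨i.1, Finset.mem_insert_of_mem i.2⟩ with hρ
  have hinj : Set.InjOn ρ ↑(CF.image (pj (insert v W))) := by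
    intro y1 hy1 y2 hy2 hr
    simp only [Finset.coe_image, Set.mem_image, Finset.mem_coe] at hy1 hy2
    obtain ⟨x1, hx1, rfl⟩ := hy1
    obtain ⟨x2, hx2, rfl⟩ := hy2
    have hW : ∀ j ∈ W, x1 j = x2 j := fun j hj => congrFun hr ⟨j, hj⟩
    have hv : x1 v = x2 v := hfree x1 hx1 x2 hx2 hW
    funext i
    obtain ⟨i, hi⟩ := i
    rcases Finset.mem_insert.1 hi with h1 | h2
    · subst h1; exact hv
    · exact hW i h2
  calc (CF.image (pj (insert v W))).card
      = ((CF.image (pj (insert v W))).image ρ).card :=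
        (Finset.card_image_of_injOn hinj).symm
    _ ≤ (CF.image (pj W)).card := by
        apply Finset.card_le_card
        intro z hz
        obtain ⟨y, hy, rfl⟩ := Finset.mem_image.1 hz
        obtain ⟨x, hx, rfl⟩ := Finset.mem_image.1 hy
        exact Finset.mem_image_of_mem _ hx

lemma pj_card_congr (CF : Finset (Fin n → A)) {W W' : Finset (Fin n)} (h : W = W') :
    (CF.image (pj W)).card = (CF.image (pj W')).card := by subst h; rfl

lemma pj_union_card_le {q : ℕ} (hA : Fintype.card A = q)
    (CF : Finset (Fin n → A)) (D : Finset (Fin n)) :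
    ∀ W : Finset (Fin n),
      (CF.image (pj (W ∪ D))).card ≤ (CF.image (pj W)).card * q ^ D.card := by
  classical
  induction D using Finset.induction_on with
  | empty =>
    intro W
    rw [pj_card_congr CF (Finset.union_empty W)]
    simp
  | @insert a D ha ih =>
    intro W
    calc (CF.image (pj (W ∪ insert a D))).card
        = (CF.image (pj (insert a (W ∪ D)))).card :=
          pj_card_congr CF (Finset.union_insert a W D)
      _ ≤ (CF.image (pj (W ∪ D))).card * q := pj_insert_card_le hA CF _ a
      _ ≤ (CF.image (pj W)).card * q ^ D.card * q :=
          Nat.mul_le_mul_right q (ih W)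
      _ = (CF.image (pj W)).card * q ^ (insert a D).card := by
          rw [Finset.card_insert_of_notMem ha, pow_succ, mul_assoc]

lemma step {q r : ℕ} (hA : Fintype.card A = q)
    (CF : Finset (Fin n → A)) (Nb : Fin n → Finset (Fin n))
    (hNb : ∀ v, (Nb v).card = r) (hvNb : ∀ v, v ∉ Nb v)
    (hrec : ∀ v, ∀ x ∈ CF, ∀ y ∈ CF, (∀ j ∈ Nb v, x j = y j) → x v = y v)
    (W : Finset (Fin n)) (hW : W ≠ Finset.univ) :
    ∃ (W' : Finset (Fin n)) (s : ℕ),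
      (CF.image (pj W')).card ≤ (CF.image (pj W)).card * q ^ s ∧
      s ≤ r ∧ W'.card = W.card + s + 1 := by
  classical
  have hv : ∃ v, v ∉ W := by
    by_contra h
    push_neg at h
    exact hW (Finset.eq_univ_iff_forall.2 h)
  obtain ⟨v, hvW⟩ := hv
  set D := Nb v \ W with hD
  refine ⟨insert v (W ∪ D), D.card, ?_, ?_, ?_⟩
  · calc (CF.image (pj (insert v (W ∪ D)))).card
        ≤ (CF.image (pj (W ∪ D))).card := by
          apply pj_free_card_le
          intro x hx y hy hagree
          refine hrec v x hx y hy ?_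
          intro j hj
          by_cases hjW : j ∈ W
          · exact hagree j (Finset.mem_union_left _ hjW)
          · exact hagree j (Finset.mem_union_right _ (Finset.mem_sdiff.2 ⟨hj, hjW⟩))
      _ ≤ (CF.image (pj W)).card * q ^ D.card := pj_union_card_le hA CF D W
  · exact le_trans (Finset.card_le_card (Finset.sdiff_subset)) (le_of_eq (hNb v))
  · have hvWD : v ∉ W ∪ D := by
      intro h
      rcases Finset.mem_union.1 h with h | h
      · exact hvW h
      · exact hvNb v (Finset.mem_sdiff.1 h).1
    rw [Finset.card_insert_of_notMem hvWD,
      Finset.card_union_of_disjoint (Finset.disjoint_sdiff)]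

end Stmt15Aux

open Stmt15Aux in
/-- for an `r`-regular graph `G`, any RDSS code for `G` of size at
least `q^k` and minimum distance `d` satisfies `d ≤ n − k − ⌈k/r⌉ + 2`. -/
theorem stmt15 {n q k d r : ℕ} (hn : 1 ≤ n) (hq : 2 ≤ q) (hk : 1 ≤ k) (hr : 1 ≤ r)
    {A : Type} [Fintype A] [DecidableEq A] (hA : Fintype.card A = q)
    (G : SimpleGraph (Fin n))
    (hreg : ∀ v : Fin n, ({u : Fin n | G.Adj v u}).ncard = r)
    (C : Set (Fin n → A)) (hC : IsRDSS G.Adj C)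
    (hsize : q ^ k ≤ C.ncard)
    (hdist : ∀ x ∈ C, ∀ y ∈ C, x ≠ y → d ≤ hammingDist x y) :
    (d : ℤ) ≤ (n : ℤ) - (k : ℤ) - ⌈(k : ℚ) / (r : ℚ)⌉ + 2 := by
  classical
  set CF : Finset (Fin n → A) := (Set.toFinite C).toFinset with hCFdef
  have hmemCF : ∀ x, x ∈ CF ↔ x ∈ C := fun x => Set.Finite.mem_toFinset _
  have hCFcard : q ^ k ≤ CF.card := by
    rwa [hCFdef, ← Set.ncard_eq_toFinset_card C (Set.toFinite C)]
  have hq1 : 1 < q := hq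
  -- neighborhoods as finsets
  set Nb : Fin n → Finset (Fin n) := fun v => (Set.toFinite {u | G.Adj v u}).toFinset
    with hNbdef
  have hNbmem : ∀ v j, j ∈ Nb v ↔ G.Adj v j := fun v j => Set.Finite.mem_toFinset _
  have hNbcard : ∀ v, (Nb v).card = r := by
    intro v
    rw [hNbdef, ← Set.ncard_eq_toFinset_card _ (Set.toFinite _)]
    exact hreg v
  have hvNb : ∀ v, v ∉ Nb v := by
    intro v h
    exact G.irrefl ((hNbmem v v).1 h)
  have hrec : ∀ v, ∀ x ∈ CF, ∀ y ∈ CF, (∀ j ∈ Nb v, x j = y j) → x v = y v := by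
    intro v x hx y hy h
    exact hC v x ((hmemCF x).1 hx) y ((hmemCF y).1 hy)
      (fun j hj => h j ((hNbmem v j).2 hj))
  -- cardinality of full projection
  have hpjuniv : CF.card = (CF.image (pj (Finset.univ : Finset (Fin n)))).card := by
    refine (Finset.card_image_of_injective _ ?_).symm
    intro x y h
    funext i
    exact congrFun h ⟨i, Finset.mem_univ i⟩
  -- the greedy invariant
  have key : ∀ i : ℕ,
      (∃ (W : Finset (Fin n)) (e : ℕ), W ≠ Finset.univ ∧
        (CF.image (pj W)).card ≤ q ^ e ∧ e ≤ i * r ∧ e + i ≤ W.card ∧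
        W.card ≤ i * (r + 1)) ∨
      (∃ j e : ℕ, j ≤ i ∧ e + j ≤ n ∧ n ≤ j * (r + 1) ∧
        CF.card ≤ q ^ e ∧ e ≤ j * r) := by
    intro i
    induction i with
    | zero =>
      left
      refine ⟨∅, 0, ?_, ?_, by simp, by simp, by simp⟩
      · intro h
        have h2 := congrArg Finset.card h
        rw [Finset.card_empty, Finset.card_univ, Fintype.card_fin] at h2
        omega
      · rw [pow_zero]
        refine Finset.card_le_one.2 ?_
        intro a _ b _
        funext i
        exact absurd i.2 (Finset.notMem_empty i.1)
    | succ i ih =>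
      rcases ih with ⟨W, e, hWu, hPe, her, heiW, hWc⟩ | ⟨j, e, hji, h1, h2, h3, h4⟩
      · obtain ⟨W', s, hP', hsr, hc'⟩ := step hA CF Nb hNbcard hvNb hrec W hWu
        have hP'e : (CF.image (pj W')).card ≤ q ^ (e + s) := by
          calc (CF.image (pj W')).card ≤ (CF.image (pj W)).card * q ^ s := hP'
            _ ≤ q ^ e * q ^ s := Nat.mul_le_mul_right _ hPe
            _ = q ^ (e + s) := (pow_add q e s).symm
        have hers : e + s ≤ (i + 1) * r := by
          have : (i + 1) * r = i * r + r := by ring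
          omega
        have hWc' : W'.card ≤ (i + 1) * (r + 1) := by
          have h5 : (i + 1) * (r + 1) = i * (r + 1) + (r + 1) := by ring
          omega
        by_cases hW' : W' = Finset.univ
        · right
          have hn' : W'.card = n := by
            rw [hW', Finset.card_univ, Fintype.card_fin]
          refine ⟨i + 1, e + s, le_refl _, by omega, by omega, ?_, hers⟩
          rw [hpjuniv, ← hW']
          exact hP'e
        · left
          exact ⟨W', e + s, hW', hP'e, hers, by omega, hWc'⟩
      · exact Or.inr ⟨j, e, hji.trans (Nat.le_succ i), h1, h2, h3, h4⟩
  -- Fact 2: k*(r+1) ≤ n*r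
  have hfact2 : k * (r + 1) ≤ n * r := by
    rcases key n with ⟨W, e, hWu, _, _, heiW, _⟩ | ⟨j, e, _, h1, h2, h3, _⟩
    · exfalso
      have hWle : W.card ≤ n := by
        have := Finset.card_le_univ W
        rwa [Fintype.card_fin] at this
      have : W.card = n := by omega
      exact hWu (Finset.eq_univ_of_card W (by rwa [Fintype.card_fin]))
    · have hke : k ≤ e := (Nat.pow_le_pow_iff_right hq1).1 (hCFcard.trans h3)
      have hkj : k + j ≤ n := by omega
      have := Nat.mul_le_mul_right (r + 1) hkj
      nlinarith
  -- the ceiling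
  obtain ⟨c, hc⟩ : ∃ c : ℤ, ⌈(k : ℚ) / (r : ℚ)⌉ = c := ⟨_, rfl⟩
  have hr0 : (0 : ℚ) < (r : ℚ) := by positivity
  have hc1 : (1 : ℤ) ≤ c := by
    rw [← hc]
    exact Int.ceil_pos.2 (div_pos (by positivity) hr0)
  have hcnk : c ≤ (n : ℤ) - k := by
    rw [← hc]
    refine Int.ceil_le.2 ?_
    rw [div_le_iff₀ hr0]
    push_cast
    have hf2q : (k : ℚ) * (r + 1) ≤ (n : ℚ) * r := by exact_mod_cast hfact2
    nlinarith [hf2q]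
  set m : ℕ := (c - 1).toNat with hmdef
  have hmz : (m : ℤ) = c - 1 := Int.toNat_of_nonneg (by omega)
  have hmrk : m * r + 1 ≤ k := by
    have h1 : ((c : ℚ) - 1) * r < k := by
      have h := Int.ceil_lt_add_one ((k : ℚ) / (r : ℚ))
      rw [hc] at h
      have h2 : (c : ℚ) - 1 < (k : ℚ) / (r : ℚ) := by linarith
      calc ((c : ℚ) - 1) * r < ((k : ℚ) / (r : ℚ)) * r := by
            exact mul_lt_mul_of_pos_right h2 hr0
        _ = k := div_mul_cancel₀ _ (ne_of_gt hr0)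
    have h3 : ((m : ℚ)) * r < k := by
      have : ((m : ℚ)) = (c : ℚ) - 1 := by exact_mod_cast hmz
      rwa [this]
    have : (m * r : ℕ) < k := by exact_mod_cast h3
    omega
  have hnkm : k + m + 1 ≤ n := by omega
  -- run greedy for m steps
  have hmain : ∃ W'' : Finset (Fin n), k - 1 + m ≤ W''.card ∧
      (CF.image (pj W'')).card < CF.card := by
    rcases key m with ⟨W, e, hWu, hPe, her, heiW, hWc⟩ | ⟨j, e, hjm, h1, h2, h3, h4⟩
    · have hek : e < k := by
        have := her
        omega
      by_cases hbig : k - 1 + m ≤ W.card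
      · refine ⟨W, hbig, ?_⟩
        calc (CF.image (pj W)).card ≤ q ^ e := hPe
          _ < q ^ k := Nat.pow_lt_pow_right hq1 hek
          _ ≤ CF.card := hCFcard
      · push_neg at hbig
        obtain ⟨W'', hsub, hcard⟩ := Finset.exists_superset_card_eq
          (le_of_lt hbig) (by rw [Fintype.card_fin]; omega)
        refine ⟨W'', le_of_eq hcard.symm, ?_⟩
        have hbatch := pj_union_card_le hA CF (W'' \ W) W
        rw [pj_card_congr CF (Finset.union_sdiff_of_subset hsub)] at hbatch
        have hDcard : (W'' \ W).card = (k - 1 + m) - W.card := by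
          rw [Finset.card_sdiff_of_subset hsub, hcard]
        calc (CF.image (pj W'')).card
            ≤ (CF.image (pj W)).card * q ^ (W'' \ W).card := hbatch
          _ ≤ q ^ e * q ^ (W'' \ W).card := Nat.mul_le_mul_right _ hPe
          _ = q ^ (e + (W'' \ W).card) := (pow_add _ _ _).symm
          _ < q ^ k := Nat.pow_lt_pow_right hq1 (by omega)
          _ ≤ CF.card := hCFcard
    · exfalso
      have he : e < k := by
        have : j * r ≤ m * r := Nat.mul_le_mul_right r hjm
        omega
      have : CF.card < CF.card :=
        lt_of_le_of_lt h3 (lt_of_lt_of_le (Nat.pow_lt_pow_right hq1 he) hCFcard)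
      omega
  obtain ⟨W'', hW''card, hlt⟩ := hmain
  -- pigeonhole
  obtain ⟨x, hx, y, hy, hne, hpj⟩ :=
    Finset.exists_ne_map_eq_of_card_lt_of_maps_to hlt
      (fun a ha => Finset.mem_image_of_mem (pj W'') ha)
  have hxC : x ∈ C := (hmemCF x).1 hx
  have hyC : y ∈ C := (hmemCF y).1 hy
  have hagree : ∀ i ∈ W'', x i = y i := fun i hi => congrFun hpj ⟨i, hi⟩
  have hham : hammingDist x y ≤ n - W''.card := by
    have hsub : (Finset.filter (fun i => x i ≠ y i) Finset.univ) ⊆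
        Finset.univ \ W'' := by
      intro i hi
      rw [Finset.mem_sdiff]
      refine ⟨Finset.mem_univ i, fun hiW => ?_⟩
      exact (Finset.mem_filter.1 hi).2 (hagree i hiW)
    calc hammingDist x y
        = (Finset.filter (fun i => x i ≠ y i) Finset.univ).card := rfl
      _ ≤ (Finset.univ \ W'').card := Finset.card_le_card hsub
      _ = n - W''.card := by
          rw [Finset.card_sdiff_of_subset (Finset.subset_univ _), Finset.card_univ,
            Fintype.card_fin]
  have hd : d ≤ n - W''.card := le_trans (hdist x hxC y hyC hne) hham
  have hW''n : W''.card ≤ n := by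
    have := Finset.card_le_univ W''
    rwa [Fintype.card_fin] at this
  rw [hc]
  omega
end

section
/- Let G be a finite simple undirected graph on the vertex set {1,…,n}, let q ≥ 2 be an integer, and let C be a cooperative 2-RDSS code for G over an alphabet A with |A| = q. Then for every 3-path vertex cover S of G (a set S of vertices such that every path on 3 distinct vertices v1, v2, v3 of G, with v1v2 and v2v3 edges, contains at least one vertex of S), one has |C| ≤ q^{|S|}. -/
/-- any cooperative 2-RDSS code for an undirected graph `G` has
size at most `q ^ |S|` for every 3-path vertex cover `S` of `G`. Condition `h1`
is single-vertex recovery; `h2` is recovery of both endpoints of any edge from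
the joint outside neighborhood. -/
theorem stmt16 {n q : ℕ} (hn : 1 ≤ n) (hq : 2 ≤ q) {A : Type} [Fintype A]
    (hA : Fintype.card A = q) (G : SimpleGraph (Fin n))
    (C : Set (Fin n → A))
    (h1 : IsRDSS G.Adj C)
    (h2 : ∀ u v : Fin n, G.Adj u v → ∀ x ∈ C, ∀ y ∈ C,
      (∀ j : Fin n, j ≠ u → j ≠ v → (G.Adj u j ∨ G.Adj v j) → x j = y j) →
      x u = y u ∧ x v = y v)
    (S : Finset (Fin n))
    (hS : ∀ v1 v2 v3 : Fin n, v1 ≠ v3 → G.Adj v1 v2 → G.Adj v2 v3 →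
      v1 ∈ S ∨ v2 ∈ S ∨ v3 ∈ S) :
    C.ncard ≤ q ^ S.card := by
  classical
  have key : ∀ x ∈ C, ∀ y ∈ C, (∀ s ∈ S, x s = y s) → x = y := by
    intro x hx y hy hxy
    funext v
    by_cases hvS : v ∈ S
    · exact hxy v hvS
    · by_cases hu : ∃ u, G.Adj v u ∧ u ∉ S
      · obtain ⟨u, hvu, huS⟩ := hu
        refine (h2 v u hvu x hx y hy ?_).1
        intro j hjv hju hadj
        apply hxy
        rcases hadj with h | h
        · rcases hS j v u hju h.symm hvu with hj | hv' | hu'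
          · exact hj
          · exact absurd hv' hvS
          · exact absurd hu' huS
        · rcases hS j u v hjv h.symm hvu.symm with hj | hu' | hv'
          · exact hj
          · exact absurd hu' huS
          · exact absurd hv' hvS
      · push_neg at hu
        apply h1 v x hx y hy
        intro j hvj
        exact hxy j (hu j hvj)
  set f : (Fin n → A) → (S → A) := fun x s => x s with hf
  have hinj : Set.InjOn f C := by
    intro x hx y hy h
    exact key x hx y hy (fun s hs => congrFun h ⟨s, hs⟩)
  calc C.ncard = (f '' C).ncard := (Set.ncard_image_of_injOn hinj).symm
    _ ≤ (Set.univ : Set (S → A)).ncard :=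
        Set.ncard_le_ncard (Set.subset_univ _) Set.finite_univ
    _ = Fintype.card (S → A) := by rw [Set.ncard_univ, Nat.card_eq_fintype_card]
    _ = q ^ S.card := by
        rw [Fintype.card_fun, hA, Fintype.card_coe]
end

section
/- Let G be a finite directed graph (with no loops) on the vertex set {1,…,n}, let q be a prime power, and let A be an n×n matrix over the finite field F_q that fits G, i.e., A_{ii} ≠ 0 for all i and A_{ij} = 0 whenever i ≠ j and (i,j) is not an edge of G. Then the null space ker A = { x ∈ F_q^n : A x = 0 } is an RDSS code for G over F_q, and its size is q^{n − rank(A)}. In particular, there exists an RDSS code for G over F_q of size q^{n − minrank_q(G)}, where minrank_q(G) is the minimum rank over F_q of a matrix fitting G. -/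
open Matrix

theorem Matrix.ncard_setOf_mulVec_eq_zero {m n F : Type*} [Fintype n] [Field F] [Finite F]
    (M : Matrix m n F) :
    {x : n → F | M *ᵥ x = 0}.ncard = Nat.card F ^ (Fintype.card n - M.rank) := by
  have hrank : M.rank + Module.finrank F (LinearMap.ker M.mulVecLin) = Fintype.card n := by
    rw [Matrix.rank]
    simpa using LinearMap.finrank_range_add_finrank_ker M.mulVecLin
  change (LinearMap.ker M.mulVecLin : Set (n → F)).ncard = _
  rw [← Nat.card_coe_set_eq, SetLike.coe_sort_coe, Module.natCard_eq_pow_finrank (K := F)]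
  congr 1
  omega

namespace Matrix

def Fits {ι R : Type*} [Zero R] (Adj : ι → ι → Prop) (M : Matrix ι ι R) : Prop :=
  (∀ i, M i i ≠ 0) ∧ ∀ i j, i ≠ j → ¬ Adj i j → M i j = 0

theorem Fits.mulVec_apply {ι R : Type*} [Fintype ι] [NonUnitalNonAssocSemiring R]
    {Adj : ι → ι → Prop} {M : Matrix ι ι R} (hM : M.Fits Adj) {i : ι} {x : ι → R}
    (hx : ∀ j, Adj i j → x j = 0) : (M *ᵥ x) i = M i i * x i := by
  refine Finset.sum_eq_single i (fun j _ hji => ?_) (absurd (Finset.mem_univ i))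
  by_cases hij : Adj i j
  · simp [hx j hij]
  · simp [hM.2 i j (Ne.symm hji) hij]

theorem Fits.isRDSS_setOf_mulVec_eq_zero {n : ℕ} {R : Type*} [Ring R] [NoZeroDivisors R]
    {Adj : Fin n → Fin n → Prop} {M : Matrix (Fin n) (Fin n) R} (hM : M.Fits Adj) :
    IsRDSS Adj {x : Fin n → R | M *ᵥ x = 0} := by
  intro i x hx y hy hxy
  have hdiff : (M *ᵥ (x - y)) i = 0 := by simp [Matrix.mulVec_sub, hx.out, hy.out]
  rw [hM.mulVec_apply (x := x - y) fun j hj => sub_eq_zero.mpr (hxy j hj)] at hdiff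
  exact sub_eq_zero.mp ((mul_eq_zero.mp hdiff).resolve_left (hM.1 i))

end Matrix

noncomputable def minrank {n : ℕ} (F : Type*) [Field F] (Adj : Fin n → Fin n → Prop) : ℕ :=
  sInf {r | ∃ B : Matrix (Fin n) (Fin n) F, B.Fits Adj ∧ B.rank = r}

theorem Matrix.Fits.exists_rank_eq_minrank {n : ℕ} {F : Type*} [Field F]
    {Adj : Fin n → Fin n → Prop} {M : Matrix (Fin n) (Fin n) F} (hM : M.Fits Adj) :
    ∃ B : Matrix (Fin n) (Fin n) F, B.Fits Adj ∧ B.rank = minrank F Adj :=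
  Nat.sInf_mem (s := {r | ∃ B : Matrix (Fin n) (Fin n) F, B.Fits Adj ∧ B.rank = r})
    ⟨M.rank, M, hM, rfl⟩

theorem stmt17_general {n : ℕ} {F : Type} [Field F] [Fintype F] {q : ℕ}
    (hq : Fintype.card F = q)
    (Adj : Fin n → Fin n → Prop)
    (M : Matrix (Fin n) (Fin n) F)
    (hfit : (∀ i, M i i ≠ 0) ∧ ∀ i j, i ≠ j → ¬ Adj i j → M i j = 0) :
    (IsRDSS Adj {x : Fin n → F | M.mulVec x = 0} ∧
      ({x : Fin n → F | M.mulVec x = 0}).ncard = q ^ (n - M.rank)) ∧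
    ∃ C : Set (Fin n → F), IsRDSS Adj C ∧
      C.ncard = q ^ (n - sInf {r : ℕ | ∃ B : Matrix (Fin n) (Fin n) F,
        ((∀ i, B i i ≠ 0) ∧ ∀ i j, i ≠ j → ¬ Adj i j → B i j = 0) ∧ B.rank = r}) := by
  have hcard (B : Matrix (Fin n) (Fin n) F) :
      {x : Fin n → F | B *ᵥ x = 0}.ncard = q ^ (n - B.rank) := by
    rw [B.ncard_setOf_mulVec_eq_zero, Nat.card_eq_fintype_card, hq, Fintype.card_fin]
  have hM : M.Fits Adj := hfit
  refine ⟨⟨hM.isRDSS_setOf_mulVec_eq_zero, hcard M⟩, ?_⟩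
  obtain ⟨B, hB, hBrank⟩ := hM.exists_rank_eq_minrank
  refine ⟨_, hB.isRDSS_setOf_mulVec_eq_zero, ?_⟩
  rw [hcard, hBrank, minrank]
  rfl

/-- if a matrix `M` over the finite field `F` (of size `q`) fits
the directed graph `G`, then `ker M` is an RDSS code for `G` of size
`q^{n − rank M}`; in particular there is an RDSS code of size
`q^{n − minrank_q(G)}`. -/
theorem stmt17 {n : ℕ} (hn : 1 ≤ n) {F : Type} [Field F] [Fintype F] {q : ℕ}
    (hq : Fintype.card F = q)
    (Adj : Fin n → Fin n → Prop) (hirr : ∀ i, ¬ Adj i i)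
    (M : Matrix (Fin n) (Fin n) F)
    (hfit : (∀ i, M i i ≠ 0) ∧ ∀ i j, i ≠ j → ¬ Adj i j → M i j = 0) :
    (IsRDSS Adj {x : Fin n → F | M.mulVec x = 0} ∧
      ({x : Fin n → F | M.mulVec x = 0}).ncard = q ^ (n - M.rank)) ∧
    ∃ C : Set (Fin n → F), IsRDSS Adj C ∧
      C.ncard = q ^ (n - sInf {r : ℕ | ∃ B : Matrix (Fin n) (Fin n) F,
        ((∀ i, B i i ≠ 0) ∧ ∀ i j, i ≠ j → ¬ Adj i j → B i j = 0) ∧ B.rank = r}) :=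
  stmt17_general hq Adj M hfit
end

section
/- Let G be a finite directed graph on the vertex set {1,…,n} and let q be a prime power. Suppose f : F_q^n → F_q^ℓ is a linear map which is the encoding function of an index code for G over F_q, i.e., there exist decoding functions g_i : F_q^ℓ × F_q^{N(i)} → F_q with g_i(f(y), y restricted to N(i)) = y_i for all y ∈ F_q^n and all vertices i. Then the kernel ker f = { y ∈ F_q^n : f(y) = 0 } is an RDSS code for G over F_q, and its size is q^{n − rank(f)}. -/
theorem isRDSS_preimage_singleton {n : ℕ} {A B : Type*} {Adj : Fin n → Fin n → Prop}
    (f : (Fin n → A) → B) (g : (i : Fin n) → B → ({j : Fin n // Adj i j} → A) → A)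
    (hg : ∀ y i, g i (f y) (fun j => y j.1) = y i) (b : B) :
    IsRDSS Adj (f ⁻¹' {b}) := by
  intro i x (hx : f x = b) y (hy : f y = b) hxy
  have hrestrict : (fun j : {j // Adj i j} => x j.1) = fun j => y j.1 :=
    funext fun j => hxy j.1 j.2
  rw [← hg x i, ← hg y i, hx, hy, hrestrict]

theorem LinearMap.ncard_ker {K V W : Type*} [Field K] [Fintype K] [AddCommGroup V] [Module K V]
    [FiniteDimensional K V] [AddCommGroup W] [Module K W] (f : V →ₗ[K] W) :
    (LinearMap.ker f : Set V).ncard =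
      Fintype.card K ^ (Module.finrank K V - Module.finrank K (LinearMap.range f)) := by
  rw [← f.finrank_range_add_finrank_ker, Nat.add_sub_cancel_left, ← Nat.card_eq_fintype_card]
  exact Module.natCard_eq_pow_finrank (V := LinearMap.ker f)

theorem stmt18_general {n l : ℕ} {F : Type} [Field F] [Fintype F] {q : ℕ}
    (hq : Fintype.card F = q)
    (Adj : Fin n → Fin n → Prop)
    (f : (Fin n → F) →ₗ[F] (Fin l → F))
    (g : (i : Fin n) → (Fin l → F) → ({j : Fin n // Adj i j} → F) → F)
    (hg : ∀ y : Fin n → F, ∀ i : Fin n, g i (f y) (fun j => y j.1) = y i) :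
    IsRDSS Adj {y : Fin n → F | f y = 0} ∧
      ({y : Fin n → F | f y = 0}).ncard =
        q ^ (n - Module.finrank F (LinearMap.range f)) := by
  refine ⟨isRDSS_preimage_singleton f g hg 0, ?_⟩
  have hker := f.ncard_ker
  rw [Module.finrank_fin_fun, hq] at hker
  exact hker

/-- the kernel of the (linear) encoding map of a linear index code
for `G` over a finite field `F` of size `q` is an RDSS code for `G` of size
`q^{n − rank f}`. -/
theorem stmt18 {n l : ℕ} (hn : 1 ≤ n) {F : Type} [Field F] [Fintype F] {q : ℕ}
    (hq : Fintype.card F = q)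
    (Adj : Fin n → Fin n → Prop) (hirr : ∀ i, ¬ Adj i i)
    (f : (Fin n → F) →ₗ[F] (Fin l → F))
    (g : (i : Fin n) → (Fin l → F) → ({j : Fin n // Adj i j} → F) → F)
    (hg : ∀ y : Fin n → F, ∀ i : Fin n, g i (f y) (fun j => y j.1) = y i) :
    IsRDSS Adj {y : Fin n → F | f y = 0} ∧
      ({y : Fin n → F | f y = 0}).ncard =
        q ^ (n - Module.finrank F (LinearMap.range f)) :=
  stmt18_general hq Adj f g hg
end
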